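/- arXiv:2204.01250 — 2 statements merged into one kernel-verified Lean document; each statement's English description precedes it below -/
import Mathlib

section
/- Let d ≥ 1, k = (k_1,…,k_d) positive integers, and ρ ∈ (0,1). Let 𝓕 = 𝓕^1 ⊗ ⋯ ⊗ 𝓕^d be a product of interval σ-algebras on a d-dimensional rectangle I, and let B = B^1 × ⋯ × B^d, where each B^δ is a union of at least one and at most 3k_δ consecutive atoms of 𝓕^δ. Then there is a constant C depending only on k, d and ρ such that for every u ∈ L^1(I) and every x ∈ B: (1/|B|) ∫_B |u(t)| dt ≤ C · Σ_{A atom of 𝓕} ρ^{|d(A, A(x))|_1} / |conv(A, A(x))| · ∫_A |u(t)| dt. -/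
open MeasureTheory Set

structure IntervalPartition where
  a : ℝ
  b : ℝ
  m : ℕ
  m_pos : 0 < m
  t : Fin (m + 1) → ℝ
  t_mono : StrictMono t
  t_first : t 0 = a
  t_last : t (Fin.last m) = b

namespace IntervalPartition

/-- The `i`-th breakpoint of the partition (extended to all of `ℕ`). -/
def pt (P : IntervalPartition) (i : ℕ) : ℝ :=
  P.t ⟨min i P.m, Nat.lt_succ_of_le (min_le_right _ _)⟩

/-- The underlying interval `[a, b)`. -/
def interval (P : IntervalPartition) : Set ℝ := Set.Ico P.a P.b

/-- The `i`-th atom of the partition, `[t_i, t_{i+1})`. -/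
def atomN (P : IntervalPartition) (i : ℕ) : Set ℝ := Set.Ico (P.pt i) (P.pt (i + 1))

/-- The length of the `i`-th atom. -/
def atomLen (P : IntervalPartition) (i : ℕ) : ℝ := P.pt (i + 1) - P.pt i

/-- Membership in the spline space `S_k(𝓕)`:  `(k-2)`-times continuously differentiable
on the interval and a polynomial of degree at most `k - 1` on each atom. -/
def IsSpline (k : ℕ) (P : IntervalPartition) (f : ℝ → ℝ) : Prop :=
  (2 ≤ k → ContDiffOn ℝ (k - 2 : ℕ) f P.interval) ∧
  ∀ i < P.m, ∃ p : Polynomial ℝ, p.natDegree ≤ k - 1 ∧ ∀ x ∈ P.atomN i, f x = p.eval x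

/-- `P.Refines Q` : `Q` is finer than `P` (same interval, more breakpoints). -/
def Refines (P Q : IntervalPartition) : Prop :=
  P.a = Q.a ∧ P.b = Q.b ∧ Set.range P.t ⊆ Set.range Q.t

/-- The pair `(i, j)` describes a B-spline support of order `r`:
the union of the consecutive atoms `i, …, j`, where either `j - i + 1 = r`, or
`j - i + 1 < r` and the union touches an endpoint of the interval. -/
def IsBSupportIdx (P : IntervalPartition) (r i j : ℕ) : Prop :=
  i ≤ j ∧ j < P.m ∧ (j + 1 - i = r ∨ (j + 1 - i < r ∧ (i = 0 ∨ j = P.m - 1)))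

/-- The B-spline support as a set. -/
def bSupportSet (P : IntervalPartition) (i j : ℕ) : Set ℝ := Set.Ico (P.pt i) (P.pt (j + 1))

/-- The length of a B-spline support. -/
def bSupportLen (P : IntervalPartition) (i j : ℕ) : ℝ := P.pt (j + 1) - P.pt i

/-- `k`-regularity with parameter `γ` of a single interval σ-algebra: any two B-spline
supports of order `k` at Euclidean distance zero have comparable lengths. -/
def KRegular (P : IntervalPartition) (k : ℕ) (γ : ℝ) : Prop :=
  ∀ i j i' j' : ℕ, P.IsBSupportIdx k i j → P.IsBSupportIdx k i' j' →
    P.pt i' ≤ P.pt (j + 1) → P.pt i ≤ P.pt (j' + 1) →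
    P.bSupportLen i j ≤ γ * P.bSupportLen i' j'

-- The index of the atom containing `x` (junk value if there is none).
open Classical in
noncomputable def idx (P : IntervalPartition) (x : ℝ) : ℕ :=
  if h : ∃ i, i < P.m ∧ x ∈ P.atomN i then h.choose else 0

end IntervalPartition

/-- The `d`-dimensional rectangle underlying a product of interval σ-algebras. -/
def rect {d : ℕ} (P : Fin d → IntervalPartition) : Set (Fin d → ℝ) :=
  Set.univ.pi fun δ => (P δ).interval

/-- The atom of the product σ-algebra with index vector `i`. -/
def prodAtomN {d : ℕ} (P : Fin d → IntervalPartition) (i : Fin d → ℕ) : Set (Fin d → ℝ) :=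
  Set.univ.pi fun δ => (P δ).atomN (i δ)

/-- `|d(A,B)|₁` for atoms with index vectors `i`, `j`. -/
def dist1 {d : ℕ} (i j : Fin d → ℕ) : ℕ := ∑ δ, ((i δ : ℤ) - (j δ : ℤ)).natAbs

/-- The volume of `conv(A, B)`, the smallest axis-parallel rectangle containing the
atoms with index vectors `i` and `j`. -/
def convVol {d : ℕ} (P : Fin d → IntervalPartition) (i j : Fin d → ℕ) : ℝ :=
  ∏ δ, ((P δ).pt (max (i δ) (j δ) + 1) - (P δ).pt (min (i δ) (j δ)))

/-- The kernel sum `Σ_A q^{|d(A, A_ix)|₁} / |conv(A, A_ix)| ∫_A |f|`. -/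
noncomputable def kern {d : ℕ} (P : Fin d → IntervalPartition) (q : ℝ)
    (f : (Fin d → ℝ) → ℝ) (ix : Fin d → ℕ) : ℝ :=
  ∑ ia : (∀ δ, Fin ((P δ).m)),
    q ^ dist1 (fun δ => (ia δ : ℕ)) ix / convVol P (fun δ => (ia δ : ℕ)) ix *
      ∫ y in prodAtomN P (fun δ => (ia δ : ℕ)), |f y|

/-- Coordinatewise `k`-regularity with parameter `γ` of a multivariate filtration. -/
def KRegularAll (d : ℕ) (F : ℕ → Fin d → IntervalPartition) (k : Fin d → ℕ) (γ : ℝ) : Prop :=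
  ∀ n δ, (F n δ).KRegular (k δ) γ

/-- Direction `r`-regularity with parameter `β`: there is no direction `δ`, no
monotone sequence of times `n 0 ≤ n 1 ≤ …`, no strictly decreasing chain of atoms
`prodAtomN (F (n 0)) (ix 0) ⊋ … ⊋ prodAtomN (F (n (β-1))) (ix (β-1))` and no B-spline
support `B` of order `r δ` in the `δ`-th coordinate of `F (n 0)` containing the `δ`-th
component of the first atom such that `B` is still a B-spline support of order `r δ`
in the `δ`-th coordinate of `F (n (β-1))`. -/
def DirRegular (d : ℕ) (F : ℕ → Fin d → IntervalPartition) (r : Fin d → ℕ) (β : ℕ) : Prop :=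
  ¬ ∃ (δ : Fin d) (n : ℕ → ℕ) (ix : ℕ → Fin d → ℕ) (i j : ℕ),
      (∀ l l', l ≤ l' → n l ≤ n l') ∧
      (∀ l, l < β → ∀ δ', ix l δ' < (F (n l) δ').m) ∧
      (∀ l l', l < l' → l' < β →
        prodAtomN (F (n l')) (ix l') ⊂ prodAtomN (F (n l)) (ix l)) ∧
      (F (n 0) δ).IsBSupportIdx (r δ) i j ∧
      (F (n 0) δ).atomN (ix 0 δ) ⊆ (F (n 0) δ).bSupportSet i j ∧
      ∃ i' j', (F (n (β - 1)) δ).IsBSupportIdx (r δ) i' j' ∧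
        (F (n (β - 1)) δ).bSupportSet i' j' = (F (n 0) δ).bSupportSet i j

/-- The tensor product spline space: the linear span of products of coordinate splines. -/
def TensorSplineSpan (d : ℕ) (k : Fin d → ℕ) (P : Fin d → IntervalPartition) :
    Submodule ℝ ((Fin d → ℝ) → ℝ) :=
  Submodule.span ℝ {G : (Fin d → ℝ) → ℝ |
    ∃ g : Fin d → ℝ → ℝ, (∀ δ, IntervalPartition.IsSpline (k δ) (P δ) (g δ)) ∧
      G = fun x => ∏ δ, g δ (x δ)}

/-- `g` is the orthogonal projection (in `L²` of the rectangle) of `f` onto the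
tensor product spline space. -/
def IsProj (d : ℕ) (k : Fin d → ℕ) (P : Fin d → IntervalPartition)
    (f g : (Fin d → ℝ) → ℝ) : Prop :=
  g ∈ TensorSplineSpan d k P ∧ ∀ h ∈ TensorSplineSpan d k P,
    ∫ x in rect P, g x * h x = ∫ x in rect P, f x * h x

/-- A multivariate interval filtration in standard form: it starts from the trivial
σ-algebra and at each step exactly one atom of exactly one coordinate σ-algebra is
split into two. -/
def StandardForm (d : ℕ) (F : ℕ → Fin d → IntervalPartition) : Prop :=
  (∀ δ, (F 0 δ).m = 1) ∧
  ∀ n, ∃ δ₀, (∀ δ, δ ≠ δ₀ → F (n + 1) δ = F n δ) ∧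
    (F n δ₀).Refines (F (n + 1) δ₀) ∧ (F (n + 1) δ₀).m = (F n δ₀).m + 1


/-!
If an atom `A` of `𝓕` lies in `B`, then so does `conv(A, A(x))`, because `A(x) ⊆ B`; moreover
`|d(A, A(x))|₁ ≤ Σ_δ 3 k_δ`. So every atom of `B` carries kernel weight
`ρ^{|d(A, A(x))|₁} / |conv(A, A(x))| ≥ ρ^{3 Σ k} / |B|`, and splitting `∫_B |u|` over the atoms
of `B` gives the claim with `C = ρ^{-3 Σ k}`.
-/

open Function

namespace IntervalPartition

variable (P : IntervalPartition)

lemma pt_mono : Monotone P.pt := fun _ _ hab =>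
  P.t_mono.monotone (Fin.mk_le_mk.mpr (min_le_min_right _ hab))

lemma pt_lt_pt {a b : ℕ} (hab : a < b) (hb : b ≤ P.m) : P.pt a < P.pt b :=
  P.t_mono (Fin.mk_lt_mk.mpr (by omega))

lemma Ico_pt_subset_interval (lo hi : ℕ) : Ico (P.pt lo) (P.pt hi) ⊆ P.interval :=
  Ico_subset_Ico (P.t_first ▸ P.t_mono.monotone (Fin.zero_le _))
    (P.t_last ▸ P.t_mono.monotone (Fin.le_last _))

lemma pairwise_disjoint_atomN : Pairwise (Disjoint on P.atomN) := by
  intro a b hab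
  wlog h : a < b generalizing a b
  · exact (this hab.symm (by omega)).symm
  exact Ico_disjoint_Ico.mpr ((min_le_left _ _).trans ((P.pt_mono h).trans (le_max_right _ _)))

lemma le_and_lt_of_mem_atomN {lo hi n : ℕ} {y : ℝ} (hn : y ∈ P.atomN n)
    (hy : y ∈ Ico (P.pt lo) (P.pt hi)) : lo ≤ n ∧ n < hi := by
  constructor
  · by_contra! h
    exact (hy.1.trans_lt hn.2).not_ge (P.pt_mono h)
  · by_contra! h
    exact (hn.1.trans_lt hy.2).not_ge (P.pt_mono h)

lemma exists_mem_atomN_of_mem_Ico {lo hi : ℕ} {y : ℝ} (hy : y ∈ Ico (P.pt lo) (P.pt hi)) :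
    ∃ n, lo ≤ n ∧ n < hi ∧ y ∈ P.atomN n := by
  induction hi with
  | zero => exact absurd (hy.1.trans_lt hy.2) (P.pt_mono (Nat.zero_le lo)).not_gt
  | succ h ih =>
    by_cases hyh : y < P.pt h
    · obtain ⟨n, hlo, hnh, hn⟩ := ih ⟨hy.1, hyh⟩
      exact ⟨n, hlo, hnh.trans (Nat.lt_succ_self h), hn⟩
    · have hn : y ∈ P.atomN h := ⟨not_lt.mp hyh, hy.2⟩
      exact ⟨h, (P.le_and_lt_of_mem_atomN hn hy).1, Nat.lt_succ_self h, hn⟩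

def atomsIn (lo hi : ℕ) : Finset (Fin P.m) := {n | lo ≤ n ∧ (n : ℕ) < hi}

lemma mem_Ico_pt_iff {lo hi : ℕ} (hhi : hi ≤ P.m) {y : ℝ} :
    y ∈ Ico (P.pt lo) (P.pt hi) ↔ ∃ n ∈ P.atomsIn lo hi, y ∈ P.atomN n := by
  constructor
  · intro hy
    obtain ⟨n, hlo, hnhi, hn⟩ := P.exists_mem_atomN_of_mem_Ico hy
    exact ⟨⟨n, hnhi.trans_le hhi⟩, Finset.mem_filter_univ _ |>.mpr ⟨hlo, hnhi⟩, hn⟩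
  · rintro ⟨n, hn, hy⟩
    obtain ⟨hlo, hnhi⟩ := (Finset.mem_filter_univ _).mp hn
    exact ⟨(P.pt_mono hlo).trans hy.1, hy.2.trans_le (P.pt_mono hnhi)⟩

end IntervalPartition

section Box

open IntervalPartition

variable {d : ℕ} (P : Fin d → IntervalPartition)

def box (lo hi : Fin d → ℕ) : Set (Fin d → ℝ) :=
  univ.pi fun δ => Ico ((P δ).pt (lo δ)) ((P δ).pt (hi δ))

def boxAtoms (lo hi : Fin d → ℕ) : Finset (∀ δ, Fin (P δ).m) :=
  Fintype.piFinset fun δ => (P δ).atomsIn (lo δ) (hi δ)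

lemma box_subset_rect (lo hi : Fin d → ℕ) : box P lo hi ⊆ rect P :=
  pi_mono fun δ _ => (P δ).Ico_pt_subset_interval _ _

lemma box_eq_biUnion_prodAtomN {lo hi : Fin d → ℕ} (hhi : ∀ δ, hi δ ≤ (P δ).m) :
    box P lo hi = ⋃ b ∈ boxAtoms P lo hi, prodAtomN P fun δ => b δ := by
  ext y
  simp only [box, boxAtoms, prodAtomN, mem_univ_pi, mem_iUnion, Fintype.mem_piFinset,
    (P _).mem_Ico_pt_iff (hhi _), exists_prop, Classical.skolem, forall_and]

lemma pairwise_disjoint_prodAtomN :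
    Pairwise (Disjoint on fun b : ∀ δ, Fin (P δ).m => prodAtomN P fun δ => b δ) := by
  intro b b' hbb'
  obtain ⟨δ, hδ⟩ := Function.ne_iff.mp hbb'
  exact disjoint_univ_pi.mpr ⟨δ, (P δ).pairwise_disjoint_atomN (Fin.val_ne_of_ne hδ)⟩

lemma integral_box_eq_sum {lo hi : Fin d → ℕ} (hhi : ∀ δ, hi δ ≤ (P δ).m)
    {μ : Measure (Fin d → ℝ)} {f : (Fin d → ℝ) → ℝ} (hf : IntegrableOn f (box P lo hi) μ) :
    ∫ y in box P lo hi, f y ∂μ =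
      ∑ b ∈ boxAtoms P lo hi, ∫ y in prodAtomN P (fun δ => b δ), f y ∂μ := by
  rw [box_eq_biUnion_prodAtomN P hhi] at hf ⊢
  exact integral_biUnion_finset _ (fun _ _ => MeasurableSet.univ_pi fun _ => measurableSet_Ico)
    ((pairwise_disjoint_prodAtomN P).set_pairwise _)
    (fun _ hb => hf.mono_set (Finset.subset_set_biUnion_of_mem (f := fun b : ∀ δ, Fin (P δ).m =>
      prodAtomN P fun δ => b δ) hb))

lemma volume_box_toReal {lo hi : Fin d → ℕ} (h : lo ≤ hi) :
    (volume (box P lo hi)).toReal = ∏ δ, ((P δ).pt (hi δ) - (P δ).pt (lo δ)) :=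
  Real.volume_pi_Ico_toReal fun δ => (P δ).pt_mono (h δ)

lemma convVol_nonneg (a c : Fin d → ℕ) : 0 ≤ convVol P a c :=
  Finset.prod_nonneg fun δ _ => sub_nonneg.mpr ((P δ).pt_mono (by omega))

lemma convVol_pos {a c : Fin d → ℕ} (ha : ∀ δ, a δ < (P δ).m) (hc : ∀ δ, c δ < (P δ).m) :
    0 < convVol P a c :=
  Finset.prod_pos fun δ _ => sub_pos.mpr ((P δ).pt_lt_pt (by omega) (by grind))

lemma convVol_le_prod {lo hi a c : Fin d → ℕ} (ha : ∀ δ, lo δ ≤ a δ ∧ a δ < hi δ)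
    (hc : ∀ δ, lo δ ≤ c δ ∧ c δ < hi δ) :
    convVol P a c ≤ ∏ δ, ((P δ).pt (hi δ) - (P δ).pt (lo δ)) :=
  Finset.prod_le_prod (fun δ _ => sub_nonneg.mpr ((P δ).pt_mono (by omega)))
    fun δ _ => sub_le_sub ((P δ).pt_mono (by grind)) ((P δ).pt_mono (by grind))

lemma dist1_le_sum {lo hi a c : Fin d → ℕ} (ha : ∀ δ, lo δ ≤ a δ ∧ a δ < hi δ)
    (hc : ∀ δ, lo δ ≤ c δ ∧ c δ < hi δ) : dist1 a c ≤ ∑ δ, (hi δ - lo δ) :=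
  Finset.sum_le_sum fun δ _ => by grind

theorem average_box_le_kern {ρ : ℝ} (hρ0 : 0 < ρ) (hρ1 : ρ ≤ 1) {lo hi c : Fin d → ℕ} {N : ℕ}
    (hhi : ∀ δ, hi δ ≤ (P δ).m) (hc : ∀ δ, lo δ ≤ c δ ∧ c δ < hi δ)
    (hN : ∑ δ, (hi δ - lo δ) ≤ N) {u : (Fin d → ℝ) → ℝ} (hu : IntegrableOn u (box P lo hi)) :
    (volume (box P lo hi)).toReal⁻¹ * ∫ y in box P lo hi, |u y| ≤
      (ρ ^ N)⁻¹ * kern P ρ u c := by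
  have hweight : ∀ b ∈ boxAtoms P lo hi, (volume (box P lo hi)).toReal⁻¹ ≤
      (ρ ^ N)⁻¹ * (ρ ^ dist1 (fun δ => b δ) c / convVol P (fun δ => b δ) c) := by
    intro b hb
    have hb' : ∀ δ, lo δ ≤ b δ ∧ (b δ : ℕ) < hi δ := by
      simpa [boxAtoms, atomsIn] using hb
    have hconv := convVol_pos P (fun δ => (b δ).2) fun δ => (hc δ).2.trans_le (hhi δ)
    calc (volume (box P lo hi)).toReal⁻¹ ≤ (convVol P (fun δ => b δ) c)⁻¹ := by
          refine inv_anti₀ hconv ?_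
          rw [volume_box_toReal P fun δ => (hc δ).1.trans (hc δ).2.le]
          exact convVol_le_prod P hb' hc
      _ = (ρ ^ N)⁻¹ * (ρ ^ N / convVol P (fun δ => b δ) c) := by
          field_simp
      _ ≤ (ρ ^ N)⁻¹ * (ρ ^ dist1 (fun δ => b δ) c / convVol P (fun δ => b δ) c) := by
          have hpow := pow_le_pow_of_le_one hρ0.le hρ1 ((dist1_le_sum hb' hc).trans hN)
          gcongr
  calc (volume (box P lo hi)).toReal⁻¹ * ∫ y in box P lo hi, |u y|
      = ∑ b ∈ boxAtoms P lo hi,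
          (volume (box P lo hi)).toReal⁻¹ * ∫ y in prodAtomN P (fun δ => b δ), |u y| := by
        rw [integral_box_eq_sum P hhi hu.abs, Finset.mul_sum]
    _ ≤ ∑ b ∈ boxAtoms P lo hi, (ρ ^ N)⁻¹ * (ρ ^ dist1 (fun δ => b δ) c /
          convVol P (fun δ => b δ) c * ∫ y in prodAtomN P (fun δ => b δ), |u y|) := by
        refine Finset.sum_le_sum fun b hb => ?_
        rw [← mul_assoc]
        exact mul_le_mul_of_nonneg_right (hweight b hb) (integral_nonneg fun _ => abs_nonneg _)
    _ ≤ ∑ b : ∀ δ, Fin (P δ).m, (ρ ^ N)⁻¹ * (ρ ^ dist1 (fun δ => b δ) c /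
          convVol P (fun δ => b δ) c * ∫ y in prodAtomN P (fun δ => b δ), |u y|) := by
        refine Finset.sum_le_sum_of_subset_of_nonneg (Finset.subset_univ _) fun b _ _ => ?_
        have := convVol_nonneg P (fun δ => b δ) c
        have : 0 ≤ ∫ y in prodAtomN P (fun δ => b δ), |u y| :=
          integral_nonneg fun y => abs_nonneg (u y)
        positivity
    _ = (ρ ^ N)⁻¹ * kern P ρ u c := by
        rw [kern, Finset.mul_sum]

end Box

theorem average_le_maximal_kernel_general (d : ℕ) (k : Fin d → ℕ)
    (ρ : ℝ) (hρ0 : 0 < ρ) (hρ1 : ρ < 1) :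
    ∃ C : ℝ, 0 < C ∧
      ∀ (P : Fin d → IntervalPartition) (i l : Fin d → ℕ),
        (∀ δ, 1 ≤ l δ ∧ l δ ≤ 3 * k δ ∧ i δ + l δ ≤ (P δ).m) →
        ∀ u : (Fin d → ℝ) → ℝ, IntegrableOn u (rect P) →
        ∀ x ∈ Set.univ.pi fun δ => Set.Ico ((P δ).pt (i δ)) ((P δ).pt (i δ + l δ)),
        ∀ ix : Fin d → ℕ, (∀ δ, ix δ < (P δ).m) → x ∈ prodAtomN P ix →
          (volume (Set.univ.pi fun δ =>
              Set.Ico ((P δ).pt (i δ)) ((P δ).pt (i δ + l δ)))).toReal⁻¹ *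
            (∫ y in (Set.univ.pi fun δ =>
              Set.Ico ((P δ).pt (i δ)) ((P δ).pt (i δ + l δ))), |u y|) ≤
          C * kern P ρ u ix := by
  refine ⟨(ρ ^ (3 * ∑ δ, k δ))⁻¹, by positivity, ?_⟩
  intro P i l hil u hu x hx ix _ hxix
  have hix : ∀ δ, i δ ≤ ix δ ∧ ix δ < i δ + l δ := fun δ =>
    (P δ).le_and_lt_of_mem_atomN (hxix δ (mem_univ δ)) (hx δ (mem_univ δ))
  have hsum : ∑ δ, (i δ + l δ - i δ) ≤ 3 * ∑ δ, k δ := by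
    rw [Finset.mul_sum]
    exact Finset.sum_le_sum fun δ _ => by grind
  exact average_box_le_kern P hρ0 hρ1.le (hi := fun δ => i δ + l δ) (fun δ => (hil δ).2.2) hix
    hsum (hu.mono_set (box_subset_rect P _ _))

/-- **Pointwise comparison with the maximal kernel (Section 5.1).** There is a constant
`C` depending only on `k`, `d`, `ρ` such that for every product interval σ-algebra `𝓕`
on a `d`-dimensional rectangle, every set `B = B¹ × ⋯ × B^d` where each `B^δ` consists
of at most `3 k_δ` consecutive atoms, every `u ∈ L¹` and every `x ∈ B` lying in the atom
with index vector `ix`: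
`|B|⁻¹ ∫_B |u| ≤ C Σ_{A atom} ρ^{|d(A, A(x))|₁} / |conv(A, A(x))| ∫_A |u|`. -/
theorem average_le_maximal_kernel (d : ℕ) (hd : 1 ≤ d) (k : Fin d → ℕ)
    (hk : ∀ δ, 1 ≤ k δ) (ρ : ℝ) (hρ0 : 0 < ρ) (hρ1 : ρ < 1) :
    ∃ C : ℝ, 0 < C ∧
      ∀ (P : Fin d → IntervalPartition) (i l : Fin d → ℕ),
        (∀ δ, 1 ≤ l δ ∧ l δ ≤ 3 * k δ ∧ i δ + l δ ≤ (P δ).m) →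
        ∀ u : (Fin d → ℝ) → ℝ, IntegrableOn u (rect P) →
        ∀ x ∈ Set.univ.pi fun δ => Set.Ico ((P δ).pt (i δ)) ((P δ).pt (i δ + l δ)),
        ∀ ix : Fin d → ℕ, (∀ δ, ix δ < (P δ).m) → x ∈ prodAtomN P ix →
          (volume (Set.univ.pi fun δ =>
              Set.Ico ((P δ).pt (i δ)) ((P δ).pt (i δ + l δ)))).toReal⁻¹ *
            (∫ y in (Set.univ.pi fun δ =>
              Set.Ico ((P δ).pt (i δ)) ((P δ).pt (i δ + l δ))), |u y|) ≤
          C * kern P ρ u ix :=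
  average_le_maximal_kernel_general d k ρ hρ0 hρ1
end

section
/- Every quasidyadic interval filtration on a d-dimensional rectangle is direction (1,…,1)-regular with a parameter β depending only on the dimension d. -/
open MeasureTheory Set

/-- `Q` arises from `P` by splitting every atom of `P` into exactly two intervals:
`Q` has twice as many atoms and every breakpoint of `P` is the corresponding
even-numbered breakpoint of `Q`. -/
def DyadicSucc (P Q : IntervalPartition) : Prop :=
  Q.m = 2 * P.m ∧ Q.a = P.a ∧ Q.b = P.b ∧ ∀ i ≤ P.m, Q.pt (2 * i) = P.pt i

/-- `P = 𝒟_{·,l}` between the generation `G` and the next generation `H`: the first `l`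
atoms of `G` are split (as in `H`), the remaining atoms of `G` are kept. -/
def PartialDyadic (G H P : IntervalPartition) (l : ℕ) : Prop :=
  DyadicSucc G H ∧ l ≤ G.m ∧ P.m = G.m + l ∧ P.a = G.a ∧ P.b = G.b ∧
  (∀ j ≤ 2 * l, P.pt j = H.pt j) ∧
  (∀ i, l ≤ i → i ≤ G.m → P.pt (l + i) = G.pt i)

/-- A quasidyadic interval filtration: a filtration in standard form such that each
`𝓕_n^δ` equals some `𝒟_{ν_δ, ℓ_δ}(triv(I^δ))` with `|ν_i − ν_j| ≤ 1` for all `i, j`,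
where the dyadic extensions are built from fixed generation sequences `Gen δ`. -/
def QuasiDyadic (d : ℕ) (F : ℕ → Fin d → IntervalPartition) : Prop :=
  StandardForm d F ∧
  ∃ Gen : Fin d → ℕ → IntervalPartition,
    (∀ δ, Gen δ 0 = F 0 δ) ∧
    (∀ δ ν, DyadicSucc (Gen δ ν) (Gen δ (ν + 1))) ∧
    ∀ n, ∃ ν l : Fin d → ℕ,
      (∀ δ δ', ν δ ≤ ν δ' + 1) ∧
      ∀ δ, PartialDyadic (Gen δ (ν δ)) (Gen δ (ν δ + 1)) (F n δ) (l δ)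

namespace IntervalPartition

lemma pt_def (P : IntervalPartition) {i : ℕ} (h : i ≤ P.m) :
    P.pt i = P.t ⟨i, Nat.lt_succ_of_le h⟩ := by
  simp [pt, Nat.min_eq_left h]

lemma pt_mem_range (P : IntervalPartition) (i : ℕ) : P.pt i ∈ Set.range P.t :=
  ⟨_, rfl⟩

lemma pt_lt_pt_s17 (P : IntervalPartition) {i j : ℕ} (hij : i < j) (hj : j ≤ P.m) :
    P.pt i < P.pt j := by
  rw [pt_def P (le_trans (Nat.le_of_lt hij) hj), pt_def P hj]
  exact P.t_mono (Fin.mk_lt_mk.mpr hij)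

lemma atom_lt (P : IntervalPartition) {i : ℕ} (h : i < P.m) :
    P.pt i < P.pt (i + 1) := pt_lt_pt_s17 P (Nat.lt_succ_self i) h

lemma no_interior (P : IntervalPartition) {i : ℕ} (hi : i < P.m) {z : ℝ}
    (hz : z ∈ Set.range P.t) (h1 : P.pt i < z) (h2 : z < P.pt (i + 1)) : False := by
  obtain ⟨a, rfl⟩ := hz
  rw [pt_def P (le_of_lt hi)] at h1
  rw [pt_def P hi] at h2
  have h1' := P.t_mono.lt_iff_lt.mp h1
  have h2' := P.t_mono.lt_iff_lt.mp h2
  rw [Fin.lt_def] at h1' h2'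
  simp only at h1' h2'
  omega

lemma refines_refl (P : IntervalPartition) : P.Refines P :=
  ⟨rfl, rfl, subset_rfl⟩

lemma refines_trans {P Q R : IntervalPartition} (h1 : P.Refines Q) (h2 : Q.Refines R) :
    P.Refines R :=
  ⟨h1.1.trans h2.1, h1.2.1.trans h2.2.1, h1.2.2.trans h2.2.2⟩

/-- If an atom of the finer partition `R` has both endpoints among the breakpoints of
the coarser partition `P`, it is an atom of `P`. -/
lemma atom_mem_coarse {P R : IntervalPartition} (h : P.Refines R) {i : ℕ}
    (hi : i < R.m) (hx : R.pt i ∈ Set.range P.t) (hy : R.pt (i + 1) ∈ Set.range P.t) :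
    ∃ k < P.m, P.pt k = R.pt i ∧ P.pt (k + 1) = R.pt (i + 1) := by
  obtain ⟨a, ha⟩ := hx; obtain ⟨b, hb⟩ := hy
  have hxy := atom_lt R hi
  have hab : a < b := P.t_mono.lt_iff_lt.mp (by rw [ha, hb]; exact hxy)
  have hab' : a.val < b.val := hab
  have hbm : b.val ≤ P.m := Nat.lt_succ_iff.mp b.isLt
  have hb1 : b.val = a.val + 1 := by
    by_contra hne
    have h1 : a.val + 1 < b.val := by omega
    have hz1 : R.pt i < P.t ⟨a.val + 1, by omega⟩ := by
      rw [← ha]; exact P.t_mono (by rw [Fin.lt_def]; simp)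
    have hz2 : P.t ⟨a.val + 1, by omega⟩ < R.pt (i + 1) := by
      rw [← hb]; exact P.t_mono (by rw [Fin.lt_def]; simpa using h1)
    exact no_interior R hi (h.2.2 ⟨_, rfl⟩) hz1 hz2
  refine ⟨a.val, by omega, ?_, ?_⟩
  · rw [pt_def P (by omega), ← ha]
  · rw [pt_def P (by omega), ← hb]
    congr 1
    exact Fin.ext (by simp [hb1])

/-- An atom of the coarser partition contained in an atom of the finer partition
must coincide with it. -/
lemma atom_subset_eq {P R : IntervalPartition} (h : P.Refines R) {k i : ℕ}
    (hk : k < P.m) (hi : i < R.m)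
    (hsub : Set.Ico (P.pt k) (P.pt (k + 1)) ⊆ Set.Ico (R.pt i) (R.pt (i + 1))) :
    P.pt k = R.pt i ∧ P.pt (k + 1) = R.pt (i + 1) := by
  have hne := atom_lt P hk
  obtain ⟨h1, h2⟩ := (Set.Ico_subset_Ico_iff hne).mp hsub
  constructor
  · rcases eq_or_lt_of_le h1 with he | hlt
    · exact he.symm
    · exact (no_interior R hi (h.2.2 (pt_mem_range P k)) hlt
        (lt_of_lt_of_le hne h2)).elim
  · rcases eq_or_lt_of_le h2 with he | hlt
    · exact he
    · exact (no_interior R hi (h.2.2 (pt_mem_range P (k + 1)))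
        (lt_of_le_of_lt h1 hne) hlt).elim

end IntervalPartition

lemma DyadicSucc.refines {P Q : IntervalPartition} (h : DyadicSucc P Q) : P.Refines Q := by
  refine ⟨h.2.1.symm, h.2.2.1.symm, ?_⟩
  rintro x ⟨f, rfl⟩
  have hfm : f.val ≤ P.m := Nat.lt_succ_iff.mp f.isLt
  have : P.t f = P.pt f.val := by rw [IntervalPartition.pt_def P hfm]
  rw [this, ← h.2.2.2 f.val hfm]
  exact Q.pt_mem_range _

/-- A set is an atom of the partition `P`. -/
def IsAtomSet (P : IntervalPartition) (s : Set ℝ) : Prop :=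
  ∃ k < P.m, s = Set.Ico (P.pt k) (P.pt (k + 1))

section Gen

variable {Gen : ℕ → IntervalPartition} (hDy : ∀ ν, DyadicSucc (Gen ν) (Gen (ν + 1)))

lemma gen_refines (hDy : ∀ ν, DyadicSucc (Gen ν) (Gen (ν + 1))) {g g' : ℕ} (h : g ≤ g') :
    (Gen g).Refines (Gen g') := by
  induction g' with
  | zero => exact Nat.le_zero.mp h ▸ IntervalPartition.refines_refl _
  | succ g' ih =>
    rcases Nat.lt_succ_iff_lt_or_eq.mp (Nat.lt_succ_of_le h) with h' | h'
    · exact IntervalPartition.refines_trans (ih (Nat.lt_succ_iff.mp h')) (hDy g').refines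
    · exact h' ▸ IntervalPartition.refines_refl _

include hDy in
lemma gen_not_lt {g g' : ℕ} {s : Set ℝ} (hg : IsAtomSet (Gen g) s)
    (hg' : IsAtomSet (Gen g') s) (hlt : g < g') : False := by
  obtain ⟨k, hk, rfl⟩ := hg
  obtain ⟨k', hk', hs⟩ := hg'
  have heq := IntervalPartition.atom_subset_eq (gen_refines hDy (le_of_lt hlt)) hk hk' hs.le
  -- interior breakpoint of `Gen (g+1)` inside the atom of `Gen g`
  have hD := hDy g
  have hm2 : 2 * k + 2 ≤ (Gen (g + 1)).m := by
    rw [hD.1]; omega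
  have e1 : (Gen (g + 1)).pt (2 * k) = (Gen g).pt k := hD.2.2.2 k (le_of_lt hk)
  have e2 : (Gen (g + 1)).pt (2 * (k + 1)) = (Gen g).pt (k + 1) := hD.2.2.2 (k + 1) hk
  have hz1 : (Gen g).pt k < (Gen (g + 1)).pt (2 * k + 1) := by
    rw [← e1]; exact IntervalPartition.pt_lt_pt_s17 _ (by omega) (by omega)
  have hz2 : (Gen (g + 1)).pt (2 * k + 1) < (Gen g).pt (k + 1) := by
    rw [← e2]; exact IntervalPartition.pt_lt_pt_s17 _ (by omega) (by omega)
  have hzr : (Gen (g + 1)).pt (2 * k + 1) ∈ Set.range (Gen g').t :=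
    (gen_refines hDy hlt).2.2 ((Gen (g + 1)).pt_mem_range _)
  exact (Gen g').no_interior hk' hzr (heq.1 ▸ hz1) (heq.2 ▸ hz2)

include hDy in
lemma gen_unique {g g' : ℕ} {s : Set ℝ} (hg : IsAtomSet (Gen g) s)
    (hg' : IsAtomSet (Gen g') s) : g = g' := by
  rcases lt_trichotomy g g' with h | h | h
  · exact absurd (gen_not_lt hDy hg hg' h) not_false
  · exact h
  · exact absurd (gen_not_lt hDy hg' hg h) not_false

include hDy in
lemma gen_le_of_subset {g g' : ℕ} {s s' : Set ℝ} (hg : IsAtomSet (Gen g) s)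
    (hg' : IsAtomSet (Gen g') s') (hss : s' ⊆ s) :
    g ≤ g' ∧ (s' ≠ s → g < g') := by
  have key : g' ≤ g → s' = s := by
    intro hle
    obtain ⟨k, hk, rfl⟩ := hg
    obtain ⟨k', hk', rfl⟩ := hg'
    have heq := IntervalPartition.atom_subset_eq (gen_refines hDy hle) hk' hk hss
    rw [heq.1, heq.2]
  constructor
  · by_contra hgt
    push_neg at hgt
    exact gen_not_lt hDy hg' (key hgt.le ▸ hg) hgt
  · intro hne
    by_contra hge
    push_neg at hge
    exact hne (key hge)

end Gen

/-- Every atom of a partial-dyadic refinement is an atom of the generation `G` or of the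
next generation `H`. -/
lemma partialDyadic_atom {G H P : IntervalPartition} {l : ℕ} (h : PartialDyadic G H P l)
    {j : ℕ} (hj : j < P.m) :
    IsAtomSet G (Set.Ico (P.pt j) (P.pt (j + 1))) ∨
    IsAtomSet H (Set.Ico (P.pt j) (P.pt (j + 1))) := by
  obtain ⟨hD, hl, hm, -, -, hfirst, hlast⟩ := h
  by_cases hc : j + 1 ≤ 2 * l
  · right
    refine ⟨j, ?_, ?_⟩
    · rw [hD.1]; omega
    · rw [hfirst j (by omega), hfirst (j + 1) hc]
  · left
    push_neg at hc
    refine ⟨j - l, by omega, ?_⟩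
    have e1 : P.pt j = G.pt (j - l) := by
      have := hlast (j - l) (by omega) (by omega)
      rwa [show l + (j - l) = j by omega] at this
    have e2 : P.pt (j + 1) = G.pt (j - l + 1) := by
      have := hlast (j - l + 1) (by omega) (by omega)
      rwa [show l + (j - l + 1) = j + 1 by omega] at this
    rw [e1, e2]

lemma pi_subset_component {d : ℕ} {s t : Fin d → Set ℝ} (hne : ∀ δ, (s δ).Nonempty)
    (h : Set.univ.pi s ⊆ Set.univ.pi t) (δ0 : Fin d) : s δ0 ⊆ t δ0 := by
  intro x hx
  choose p hp using hne
  have hmem : Function.update p δ0 x ∈ Set.univ.pi s := by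
    intro δ _
    rcases eq_or_ne δ δ0 with rfl | hδ
    · simpa using hx
    · simpa [Function.update_of_ne hδ] using hp δ
  simpa using h hmem δ0 (Set.mem_univ _)

/-- **Quasidyadic filtrations are direction `(1,…,1)`-regular.** Every quasidyadic
interval filtration on a `d`-dimensional rectangle is direction `(1,…,1)`-regular with a
parameter `β` depending only on the dimension `d`. -/
theorem quasidyadic_direction_regular (d : ℕ) (hd : 1 ≤ d) :
    ∃ β : ℕ, ∀ F : ℕ → Fin d → IntervalPartition,
      (∀ n δ, (F n δ).Refines (F (n + 1) δ)) →
      QuasiDyadic d F →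
      DirRegular d F (fun _ => 1) β := by
  refine ⟨4 * d + 2, fun F hR hQD => ?_⟩
  obtain ⟨-, Gen, -, hDy, hνl⟩ := hQD
  choose νf lf hν hPD using hνl
  rintro ⟨δ, n, ix, i, j, hmono, hlt, hchain, hBij, hsub, i', j', hBij', hBset⟩
  set β : ℕ := 4 * d + 2 with hβ
  -- refinement along the filtration
  have hFref : ∀ (δ' : Fin d) (a b : ℕ), a ≤ b → (F a δ').Refines (F b δ') := by
    intro δ' a b hab
    induction b with
    | zero => exact Nat.le_zero.mp hab ▸ IntervalPartition.refines_refl _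
    | succ b ih =>
      rcases Nat.lt_succ_iff_lt_or_eq.mp (Nat.lt_succ_of_le hab) with h' | h'
      · exact IntervalPartition.refines_trans (ih (Nat.lt_succ_iff.mp h')) (hR b δ')
      · exact h' ▸ IntervalPartition.refines_refl _
  -- order-1 B-spline supports are atoms
  have hji : i = j := by
    obtain ⟨h1, h2, h3⟩ := hBij
    rcases h3 with h3 | ⟨h3, -⟩ <;> [(have h4 : j + 1 - i = 1 := h3);
      (have h4 : j + 1 - i < 1 := h3)] <;> omega
  subst hji
  have hji' : i' = j' := by
    obtain ⟨h1, h2, h3⟩ := hBij'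
    rcases h3 with h3 | ⟨h3, -⟩ <;> [(have h4 : j' + 1 - i' = 1 := h3);
      (have h4 : j' + 1 - i' < 1 := h3)] <;> omega
  subst hji'
  have him : i < (F (n 0) δ).m := hBij.2.1
  have him' : i' < (F (n (β - 1)) δ).m := hBij'.2.1
  simp only [IntervalPartition.bSupportSet] at hBset
  simp only [IntervalPartition.atomN, IntervalPartition.bSupportSet] at hsub
  have heq := IntervalPartition.atom_subset_eq
    (hFref δ (n 0) (n (β - 1)) (hmono 0 (β - 1) (Nat.zero_le _))) him him' hBset.symm.subset
  -- B is an atom at every time of the chain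
  have hBatom : ∀ l, l < β →
      IsAtomSet (F (n l) δ) (Set.Ico ((F (n 0) δ).pt i) ((F (n 0) δ).pt (i + 1))) := by
    intro l hl
    have h1 : n l ≤ n (β - 1) := hmono l (β - 1) (by omega)
    have h0 : n 0 ≤ n l := hmono 0 l (Nat.zero_le _)
    have hx : (F (n (β - 1)) δ).pt i' ∈ Set.range (F (n l) δ).t := by
      rw [← heq.1]; exact (hFref δ _ _ h0).2.2 ((F (n 0) δ).pt_mem_range i)
    have hy : (F (n (β - 1)) δ).pt (i' + 1) ∈ Set.range (F (n l) δ).t := by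
      rw [← heq.2]; exact (hFref δ _ _ h0).2.2 ((F (n 0) δ).pt_mem_range (i + 1))
    obtain ⟨k, hk, e1, e2⟩ :=
      IntervalPartition.atom_mem_coarse (hFref δ _ _ h1) him' hx hy
    exact ⟨k, hk, by rw [e1, e2, ← heq.1, ← heq.2]⟩
  -- componentwise inclusion of atoms along the chain
  have hcomp : ∀ l l', l < l' → l' < β → ∀ δ' : Fin d,
      Set.Ico ((F (n l') δ').pt (ix l' δ')) ((F (n l') δ').pt (ix l' δ' + 1)) ⊆
      Set.Ico ((F (n l) δ').pt (ix l δ')) ((F (n l) δ').pt (ix l δ' + 1)) := by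
    intro l l' hll hl' δ'
    have hsub' := (hchain l l' hll hl').subset
    simp only [prodAtomN, IntervalPartition.atomN] at hsub'
    have hne : ∀ δ'' : Fin d,
        (Set.Ico ((F (n l') δ'').pt (ix l' δ''))
          ((F (n l') δ'').pt (ix l' δ'' + 1))).Nonempty := fun δ'' =>
      Set.nonempty_Ico.mpr (IntervalPartition.atom_lt _ (hlt l' hl' δ''))
    exact pi_subset_component hne hsub' δ'
  -- the δ-component of the chain is constantly B
  have hδatom : ∀ l, l < β →
      Set.Ico ((F (n l) δ).pt (ix l δ)) ((F (n l) δ).pt (ix l δ + 1)) =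
      Set.Ico ((F (n 0) δ).pt i) ((F (n 0) δ).pt (i + 1)) := by
    intro l hl
    obtain ⟨k, hk, hkB⟩ := hBatom l hl
    have hsub1 : Set.Ico ((F (n l) δ).pt (ix l δ)) ((F (n l) δ).pt (ix l δ + 1)) ⊆
        Set.Ico ((F (n 0) δ).pt i) ((F (n 0) δ).pt (i + 1)) := by
      rcases Nat.eq_zero_or_pos l with rfl | hpos
      · exact hsub
      · exact (hcomp 0 l hpos hl δ).trans hsub
    have hfin := IntervalPartition.atom_subset_eq (IntervalPartition.refines_refl (F (n l) δ))
      (hlt l hl δ) hk (hkB ▸ hsub1)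
    rw [hfin.1, hfin.2, ← hkB]
  -- generation of each atom of the chain
  have hgex : ∀ (l : ℕ) (δ' : Fin d), ∃ g, l < β →
      νf (n l) δ' ≤ g ∧ g ≤ νf (n l) δ' + 1 ∧
      IsAtomSet (Gen δ' g)
        (Set.Ico ((F (n l) δ').pt (ix l δ')) ((F (n l) δ').pt (ix l δ' + 1))) := by
    intro l δ'
    by_cases hl : l < β
    · rcases partialDyadic_atom (hPD (n l) δ') (hlt l hl δ') with h | h
      · exact ⟨νf (n l) δ', fun _ => ⟨le_rfl, by omega, h⟩⟩
      · exact ⟨νf (n l) δ' + 1, fun _ => ⟨by omega, le_rfl, h⟩⟩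
    · exact ⟨0, fun h => absurd h hl⟩
  choose gf hgf using hgex
  -- the generation in direction δ is constant along the chain
  have hgδ : ∀ l, l < β → gf l δ = gf 0 δ := by
    intro l hl
    have h1 := (hgf l δ hl).2.2
    have h2 := (hgf 0 δ (by omega)).2.2
    rw [hδatom l hl] at h1
    rw [hδatom 0 (by omega)] at h2
    exact gen_unique (hDy δ) h1 h2
  -- generations weakly increase, strictly in some coordinate at each step
  have hstep : ∀ l, l + 1 < β →
      (∀ δ' : Fin d, gf l δ' ≤ gf (l + 1) δ') ∧ (∃ δ' : Fin d, gf l δ' < gf (l + 1) δ') := by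
    intro l hl
    have hle : ∀ δ' : Fin d, gf l δ' ≤ gf (l + 1) δ' ∧
        (Set.Ico ((F (n (l + 1)) δ').pt (ix (l + 1) δ'))
            ((F (n (l + 1)) δ').pt (ix (l + 1) δ' + 1)) ≠
          Set.Ico ((F (n l) δ').pt (ix l δ')) ((F (n l) δ').pt (ix l δ' + 1)) →
          gf l δ' < gf (l + 1) δ') := fun δ' =>
      gen_le_of_subset (hDy δ') ((hgf l δ' (by omega)).2.2) ((hgf (l + 1) δ' hl).2.2)
        (hcomp l (l + 1) (Nat.lt_succ_self l) hl δ')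
    refine ⟨fun δ' => (hle δ').1, ?_⟩
    by_contra hall
    push_neg at hall
    have halleq : ∀ δ' : Fin d,
        Set.Ico ((F (n (l + 1)) δ').pt (ix (l + 1) δ'))
            ((F (n (l + 1)) δ').pt (ix (l + 1) δ' + 1)) =
          Set.Ico ((F (n l) δ').pt (ix l δ')) ((F (n l) δ').pt (ix l δ' + 1)) := by
      intro δ'
      by_contra hne
      exact absurd ((hle δ').2 hne) (not_lt.mpr (hall δ'))
    have heqset : prodAtomN (F (n (l + 1))) (ix (l + 1)) = prodAtomN (F (n l)) (ix l) := by
      simp only [prodAtomN, IntervalPartition.atomN]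
      exact Set.pi_congr rfl fun δ' _ => halleq δ'
    exact (hchain l (l + 1) (Nat.lt_succ_self l) hl).ne heqset
  -- sum of generations as a monovariant
  have hSstep : ∀ l, l + 1 < β →
      (∑ δ' : Fin d, gf l δ') + 1 ≤ ∑ δ' : Fin d, gf (l + 1) δ' := by
    intro l hl
    obtain ⟨h1, δ'', h2⟩ := hstep l hl
    exact Nat.succ_le_of_lt (Finset.sum_lt_sum (fun δ' _ => h1 δ') ⟨δ'', Finset.mem_univ _, h2⟩)
  have hSind : ∀ l, l < β → (∑ δ' : Fin d, gf 0 δ') + l ≤ ∑ δ' : Fin d, gf l δ' := by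
    intro l
    induction l with
    | zero => intro _; omega
    | succ l ih =>
      intro hl
      have h1 := hSstep l hl
      have h2 := ih (by omega)
      omega
  -- generations stay within a bounded window
  have hbound : ∀ l, l < β → ∀ δ' : Fin d, gf l δ' ≤ gf 0 δ + 2 ∧ gf 0 δ ≤ gf l δ' + 2 := by
    intro l hl δ'
    obtain ⟨a1, a2, -⟩ := hgf l δ' hl
    obtain ⟨b1, b2, -⟩ := hgf l δ hl
    have h3 := hν (n l) δ δ'
    have h4 := hν (n l) δ' δ
    have h5 := hgδ l hl
    omega
  have hfin1 : (∑ δ' : Fin d, gf (β - 1) δ') ≤ (∑ δ' : Fin d, gf 0 δ') + 4 * d :=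
    calc (∑ δ' : Fin d, gf (β - 1) δ') ≤ ∑ δ' : Fin d, (gf 0 δ' + 4) := by
          refine Finset.sum_le_sum fun δ' _ => ?_
          have h1 := hbound (β - 1) (by omega) δ'
          have h2 := hbound 0 (by omega) δ'
          omega
    _ = (∑ δ' : Fin d, gf 0 δ') + 4 * d := by
          rw [Finset.sum_add_distrib, Finset.sum_const, Finset.card_univ, Fintype.card_fin,
            smul_eq_mul]
          ring
  have hfin2 := hSind (β - 1) (by omega)
  omega
end
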